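/- Let R be a unital associative ring and δ : R → R a derivation such that R is δ-simple, and let S = R[x;id_R,δ] be the differential polynomial ring. Then I ∩ Z(S) ≠ {0} holds for every non-zero two-sided ideal I of S, where Z(S) denotes the center of S. -/

import Mathlib

/-- `δ` is a `σ`-derivation of `R`: it is additive and satisfies the twisted Leibniz rule
`δ(ab) = σ(a)δ(b) + δ(a)b`. -/
def IsSigmaDerivation {R : Type*} [Ring R] (σ : R →+* R) (δ : R → R) : Prop :=
  (∀ a b : R, δ (a + b) = δ a + δ b) ∧ ∀ a b : R, δ (a * b) = σ a * δ b + δ a * b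

/-- `S`, together with the ring morphism `f : R →+* S` and the element `x : S`, is an Ore
extension `R[x;σ,δ]`: the powers `1, x, x², …` form a basis of `S` as a left `R`-module
(i.e. every element of `S` is, in a unique way, a finite sum `Σᵢ f(aᵢ) xⁱ`), and the
commutation rule `x·r = σ(r)·x + δ(r)` holds for all `r ∈ R`. -/
structure IsOreExtension {R S : Type*} [Ring R] [Ring S]
    (σ : R →+* R) (δ : R → R) (f : R →+* S) (x : S) : Prop where
  basis : Function.Bijective fun a : ℕ →₀ R => a.sum fun i r => f r * x ^ i
  rel : ∀ r : R, x * f r = f (σ r) * x + f (δ r)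

/-- `R` is `σ`-`δ`-simple: the only two-sided ideals `J` of `R` with `σ(J) ⊆ J` and
`δ(J) ⊆ J` are `{0}` and `R`. -/
def IsSigmaDeltaSimple {R : Type*} [Ring R] (σ : R →+* R) (δ : R → R) : Prop :=
  ∀ J : TwoSidedIdeal R, (∀ a ∈ J, σ a ∈ J) → (∀ a ∈ J, δ a ∈ J) → J = ⊥ ∨ J = ⊤

/-- `R` is `δ`-simple: the only two-sided ideals `J` of `R` with `δ(J) ⊆ J` are `{0}`
and `R`. -/
def IsDeltaSimple {R : Type*} [Ring R] (δ : R → R) : Prop :=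
  ∀ J : TwoSidedIdeal R, (∀ a ∈ J, δ a ∈ J) → J = ⊥ ∨ J = ⊤

/-! Let `n` be the least degree of a nonzero element of `I`. The `n`-th coefficients of the
elements of `I` of degree at most `n` form a two-sided ideal of `R`; it is `δ`-invariant because
`s ↦ x s - s x` acts on coefficients as `δ`, and it is nonzero, so by `δ`-simplicity it contains
`1`. The resulting `b ∈ I` of degree `n` with leading coefficient `1` is central: its commutators
with `x` and with `R` lie in `I` and have degree less than `n`, hence vanish. -/

namespace IsSigmaDerivation

variable {R : Type*} [Ring R] {σ : R →+* R} {δ : R → R}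

theorem map_zero (hδ : IsSigmaDerivation σ δ) : δ 0 = 0 := by
  simpa using hδ.1 0 0

theorem map_one (hδ : IsSigmaDerivation σ δ) : δ 1 = 0 := by
  simpa using hδ.2 1 1

end IsSigmaDerivation

theorem TwoSidedIdeal.exists_mem_ne_zero_of_ne_bot {R : Type*} [NonUnitalNonAssocRing R]
    {I : TwoSidedIdeal R} (hI : I ≠ ⊥) : ∃ s ∈ I, s ≠ 0 := by
  by_contra! h
  exact hI (TwoSidedIdeal.ext fun s => ⟨fun hs => (TwoSidedIdeal.mem_bot R).2 (h s hs),
    fun hs => (TwoSidedIdeal.mem_bot R).1 hs ▸ I.zero_mem⟩)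

theorem TwoSidedIdeal.mul_sub_mul_mem {R : Type*} [NonUnitalNonAssocRing R]
    {I : TwoSidedIdeal R} {s : R} (hs : s ∈ I) (t : R) : t * s - s * t ∈ I :=
  I.sub_mem (I.mul_mem_left _ _ hs) (I.mul_mem_right _ _ hs)

namespace IsOreExtension

variable {R S : Type*} [Ring R] [Ring S] {σ : R →+* R} {δ : R → R} {f : R →+* S} {x : S}

section General

variable (hS : IsOreExtension σ δ f x)

noncomputable def repr : S ≃+ (ℕ →₀ R) :=
  (AddEquiv.ofBijective
    (Finsupp.liftAddHom fun i => (AddMonoidHom.mulRight (x ^ i)).comp f.toAddMonoidHom)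
    hS.basis).symm

theorem repr_symm_apply (a : ℕ →₀ R) : hS.repr.symm a = a.sum fun i r => f r * x ^ i := rfl

theorem repr_monomial (r : R) (i : ℕ) : hS.repr (f r * x ^ i) = Finsupp.single i r := by
  rw [← AddEquiv.eq_symm_apply, repr_symm_apply,
    Finsupp.sum_single_index (by rw [map_zero, zero_mul])]

@[elab_as_elim]
theorem induction_on (hS : IsOreExtension σ δ f x) {p : S → Prop} (s : S) (zero : p 0)
    (add : ∀ s t, p s → p t → p (s + t)) (monomial : ∀ r i, p (f r * x ^ i)) : p s := by
  rw [← hS.repr.symm_apply_apply s]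
  induction hS.repr s using Finsupp.induction_linear with
  | zero => rwa [map_zero]
  | add a b ha hb => rw [map_add]; exact add _ _ ha hb
  | single i r => rw [← repr_monomial hS, AddEquiv.symm_apply_apply]; exact monomial r i

theorem mem_center_of_commute (hS : IsOreExtension σ δ f x) {b : S} (hx : Commute b x)
    (hf : ∀ r, Commute b (f r)) : b ∈ Subring.center S :=
  Subring.mem_center_iff.2 fun s =>
    (hS.induction_on (p := Commute b) s (Commute.zero_right b) (fun _ _ => Commute.add_right)
      fun r i => (hf r).mul_right (hx.pow_right i)).eq.symm

theorem repr_f_mul (r : R) (s : S) : hS.repr (f r * s) = r • hS.repr s := by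
  induction s using hS.induction_on with
  | zero => rw [mul_zero, map_zero, smul_zero]
  | add s t hs ht => rw [mul_add, map_add, map_add, hs, ht, smul_add]
  | monomial a i =>
    rw [← mul_assoc, ← map_mul, repr_monomial, repr_monomial, Finsupp.smul_single']

theorem repr_mul_x (s : S) : hS.repr (s * x) = Finsupp.mapDomain Nat.succ (hS.repr s) := by
  induction s using hS.induction_on with
  | zero => rw [zero_mul, map_zero, Finsupp.mapDomain_zero]
  | add s t hs ht => rw [add_mul, map_add, map_add, hs, ht, Finsupp.mapDomain_add]
  | monomial a i =>
    rw [mul_assoc, ← pow_succ, repr_monomial, repr_monomial, Finsupp.mapDomain_single]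

theorem repr_mul_apply (s t : S) (j : ℕ) :
    hS.repr (s * t) j = (hS.repr s).sum fun i a => a * hS.repr (x ^ i * t) j := by
  conv_lhs => rw [← hS.repr.symm_apply_apply s, repr_symm_apply, Finsupp.sum_mul, map_finsuppSum]
  simp only [mul_assoc, repr_f_mul, Finsupp.sum_apply, Finsupp.smul_apply, smul_eq_mul]

def DegreeLE (s : S) (n : ℕ) : Prop := ∀ j, n < j → hS.repr s j = 0

theorem exists_degreeLE (s : S) : ∃ n, hS.DegreeLE s n :=
  ⟨(hS.repr s).support.sup id, fun _ hj => Finsupp.notMem_support_iff.1 fun h =>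
    hj.not_ge (Finset.le_sup (f := id) h)⟩

theorem exists_minimal_degree {T : Set S} (hT : ∃ s ∈ T, s ≠ 0) :
    ∃ n, ∃ a ∈ T, a ≠ 0 ∧ hS.DegreeLE a n ∧
      ∀ s ∈ T, hS.DegreeLE s n → hS.repr s n = 0 → s = 0 := by
  classical
  have hP : ∃ n, ∃ s ∈ T, s ≠ 0 ∧ hS.DegreeLE s n := by
    obtain ⟨s, hsT, hs0⟩ := hT
    exact (hS.exists_degreeLE s).imp fun n hn => ⟨s, hsT, hs0, hn⟩
  obtain ⟨a, haT, ha0, ha⟩ := Nat.find_spec hP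
  refine ⟨Nat.find hP, a, haT, ha0, ha, fun s hsT hs hsn => by_contra fun hs0 => ?_⟩
  have hlt : ∀ j, Nat.find hP ≤ j → hS.repr s j = 0 := fun j hj =>
    hj.eq_or_lt.elim (fun h => h ▸ hsn) (hs j)
  rcases h : Nat.find hP with _ | m
  · exact hs0 (hS.repr.injective (Finsupp.ext fun j => by
      rw [map_zero, Finsupp.zero_apply]; exact hlt j (by omega)))
  · exact Nat.find_min hP (m := m) (by omega) ⟨s, hsT, hs0, fun j hj => hlt j (by omega)⟩

end General

section Differential

variable (hS : IsOreExtension (RingHom.id R) δ f x)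

theorem repr_x_mul_sub_mul_x (hδ : IsSigmaDerivation (RingHom.id R) δ) (s : S) :
    hS.repr (x * s - s * x) = Finsupp.mapRange δ hδ.map_zero (hS.repr s) := by
  induction s using hS.induction_on with
  | zero => rw [mul_zero, zero_mul, sub_zero, map_zero, Finsupp.mapRange_zero]
  | add s t hs ht =>
    rw [mul_add, add_mul, add_sub_add_comm, map_add, hs, ht, map_add, Finsupp.mapRange_add hδ.1]
  | monomial a i =>
    have : x * (f a * x ^ i) - f a * x ^ i * x = f (δ a) * x ^ i := by
      rw [← mul_assoc, hS.rel, RingHom.id_apply, add_mul, mul_assoc, ← pow_succ', mul_assoc,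
        ← pow_succ]
      abel
    rw [this, repr_monomial, repr_monomial, Finsupp.mapRange_single]

theorem repr_x_mul_succ (hδ : IsSigmaDerivation (RingHom.id R) δ) (s : S) (j : ℕ) :
    hS.repr (x * s) (j + 1) = δ (hS.repr s (j + 1)) + hS.repr s j := by
  rw [show x * s = (x * s - s * x) + s * x by abel, map_add hS.repr, Finsupp.add_apply,
    hS.repr_x_mul_sub_mul_x hδ, Finsupp.mapRange_apply, repr_mul_x,
    Finsupp.mapDomain_apply Nat.succ_injective]

theorem DegreeLE.x_mul (hδ : IsSigmaDerivation (RingHom.id R) δ) {s : S} {n : ℕ}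
    (hs : hS.DegreeLE s n) :
    hS.DegreeLE (x * s) (n + 1) ∧ hS.repr (x * s) (n + 1) = hS.repr s n := by
  refine ⟨fun j hj => ?_, ?_⟩
  · obtain ⟨k, rfl⟩ : ∃ k, j = k + 1 := ⟨j - 1, by omega⟩
    rw [hS.repr_x_mul_succ hδ, hs _ (by omega), hs _ (by omega), hδ.map_zero, add_zero]
  · rw [hS.repr_x_mul_succ hδ, hs _ n.lt_succ_self, hδ.map_zero, zero_add]

theorem degreeLE_pow_mul_f (hδ : IsSigmaDerivation (RingHom.id R) δ) (r : R) (i : ℕ) :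
    hS.DegreeLE (x ^ i * f r) i ∧ hS.repr (x ^ i * f r) i = r := by
  induction i with
  | zero =>
    have h : x ^ 0 * f r = f r * x ^ 0 := by rw [pow_zero, one_mul, mul_one]
    refine ⟨fun j hj => ?_, ?_⟩ <;> rw [h, repr_monomial]
    exacts [Finsupp.single_eq_of_ne hj.ne', Finsupp.single_eq_same]
  | succ i ih =>
    rw [pow_succ', mul_assoc]
    simpa only [ih.2] using ih.1.x_mul hS hδ

theorem DegreeLE.mul_f (hδ : IsSigmaDerivation (RingHom.id R) δ) {s : S} {n : ℕ}
    (hs : hS.DegreeLE s n) (r : R) :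
    hS.DegreeLE (s * f r) n ∧ hS.repr (s * f r) n = hS.repr s n * r := by
  have hsupp : ∀ i ∈ (hS.repr s).support, i ≤ n := fun i hi =>
    not_lt.1 fun h => Finsupp.mem_support_iff.1 hi (hs i h)
  refine ⟨fun j hj => ?_, ?_⟩
  · rw [repr_mul_apply]
    refine Finset.sum_eq_zero fun i hi => ?_
    dsimp only
    rw [(hS.degreeLE_pow_mul_f hδ r i).1 j ((hsupp i hi).trans_lt hj), mul_zero]
  · rw [repr_mul_apply, Finsupp.sum, Finset.sum_eq_single n (fun i hi hin => ?_) (fun hn => ?_),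
      (hS.degreeLE_pow_mul_f hδ r n).2]
    · rw [(hS.degreeLE_pow_mul_f hδ r i).1 n ((hsupp i hi).lt_of_ne hin), mul_zero]
    · rw [Finsupp.notMem_support_iff.1 hn, zero_mul]

def leadingCoeffIdeal (hδ : IsSigmaDerivation (RingHom.id R) δ) (I : TwoSidedIdeal S) (n : ℕ) :
    TwoSidedIdeal R :=
  .mk' {c | ∃ s ∈ I, hS.DegreeLE s n ∧ hS.repr s n = c}
    ⟨0, I.zero_mem, fun j _ => by rw [map_zero, Finsupp.zero_apply], by
      rw [map_zero, Finsupp.zero_apply]⟩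
    (fun {_ _} ⟨s, hsI, hs, hsc⟩ ⟨t, htI, ht, htc⟩ => ⟨s + t, I.add_mem hsI htI,
      fun j hj => by rw [map_add, Finsupp.add_apply, hs j hj, ht j hj, add_zero], by
      rw [map_add, Finsupp.add_apply, hsc, htc]⟩)
    (fun {_} ⟨s, hsI, hs, hsc⟩ => ⟨-s, I.neg_mem hsI,
      fun j hj => by rw [map_neg, Finsupp.neg_apply, hs j hj, neg_zero], by
      rw [map_neg, Finsupp.neg_apply, hsc]⟩)
    (fun {r _} ⟨s, hsI, hs, hsc⟩ => ⟨f r * s, I.mul_mem_left _ _ hsI,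
      fun j hj => by rw [repr_f_mul, Finsupp.smul_apply, hs j hj, smul_zero], by
      rw [repr_f_mul, Finsupp.smul_apply, hsc, smul_eq_mul]⟩)
    (fun {_ r} ⟨s, hsI, hs, hsc⟩ => ⟨s * f r, I.mul_mem_right _ _ hsI,
      (hs.mul_f hS hδ r).1, by rw [(hs.mul_f hS hδ r).2, hsc]⟩)

theorem mem_leadingCoeffIdeal (hδ : IsSigmaDerivation (RingHom.id R) δ) {I : TwoSidedIdeal S}
    {n : ℕ} {c : R} :
    c ∈ hS.leadingCoeffIdeal hδ I n ↔ ∃ s ∈ I, hS.DegreeLE s n ∧ hS.repr s n = c :=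
  TwoSidedIdeal.mem_mk' ..

theorem delta_mem_leadingCoeffIdeal (hδ : IsSigmaDerivation (RingHom.id R) δ)
    {I : TwoSidedIdeal S} {n : ℕ} {c : R} (hc : c ∈ hS.leadingCoeffIdeal hδ I n) :
    δ c ∈ hS.leadingCoeffIdeal hδ I n := by
  obtain ⟨s, hsI, hs, rfl⟩ := (hS.mem_leadingCoeffIdeal hδ).1 hc
  refine (hS.mem_leadingCoeffIdeal hδ).2
    ⟨x * s - s * x, I.mul_sub_mul_mem hsI x, fun j hj => ?_, ?_⟩
  all_goals rw [hS.repr_x_mul_sub_mul_x hδ, Finsupp.mapRange_apply]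
  rw [hs j hj, hδ.map_zero]

theorem mem_center_of_minimal_degree (hδ : IsSigmaDerivation (RingHom.id R) δ)
    {I : TwoSidedIdeal S} {n : ℕ}
    (hmin : ∀ s ∈ I, hS.DegreeLE s n → hS.repr s n = 0 → s = 0) {b : S} (hbI : b ∈ I)
    (hb : hS.DegreeLE b n) (hb1 : hS.repr b n = 1) : b ∈ Subring.center S := by
  have hx : x * b - b * x = 0 := by
    refine hmin _ (I.mul_sub_mul_mem hbI x) (fun j hj => ?_) ?_
    all_goals rw [hS.repr_x_mul_sub_mul_x hδ, Finsupp.mapRange_apply]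
    exacts [by rw [hb j hj, hδ.map_zero], by rw [hb1, hδ.map_one]]
  have hf (r : R) : f r * b - b * f r = 0 := by
    refine hmin _ (I.mul_sub_mul_mem hbI (f r)) (fun j hj => ?_) ?_
    all_goals rw [map_sub, Finsupp.sub_apply, repr_f_mul, Finsupp.smul_apply]
    · rw [hb j hj, (hb.mul_f hS hδ r).1 j hj, smul_zero, sub_zero]
    · rw [(hb.mul_f hS hδ r).2, hb1, smul_eq_mul, mul_one, one_mul, sub_self]
  exact hS.mem_center_of_commute (sub_eq_zero.1 hx).symm fun r => (sub_eq_zero.1 (hf r)).symm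

end Differential

end IsOreExtension

/-- If `R` is `δ`-simple, then every non-zero two-sided ideal of `S = R[x;id,δ]`
intersects the center `Z(S)` non-trivially. -/
theorem stmt_14 {R S : Type*} [Ring R] [Ring S] (δ : R → R)
    (hδ : IsSigmaDerivation (RingHom.id R) δ) (hdsimple : IsDeltaSimple δ)
    (f : R →+* S) (x : S) (hS : IsOreExtension (RingHom.id R) δ f x)
    (I : TwoSidedIdeal S) (hI : I ≠ ⊥) :
    ∃ s : S, s ∈ I ∧ s ≠ 0 ∧ s ∈ Subring.center S := by
  obtain ⟨n, a, haI, ha0, ha, hmin⟩ :=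
    hS.exists_minimal_degree (T := I) (TwoSidedIdeal.exists_mem_ne_zero_of_ne_bot hI)
  have han : hS.repr a n ≠ 0 := fun h => ha0 (hmin a haI ha h)
  have hJ : hS.leadingCoeffIdeal hδ I n = ⊤ := by
    refine (hdsimple _ fun c => hS.delta_mem_leadingCoeffIdeal hδ).resolve_left fun hJ => han ?_
    rw [← TwoSidedIdeal.mem_bot R, ← hJ, hS.mem_leadingCoeffIdeal hδ]
    exact ⟨a, haI, ha, rfl⟩
  obtain ⟨b, hbI, hb, hb1⟩ := (hS.mem_leadingCoeffIdeal hδ).1 (hJ ▸ TwoSidedIdeal.mem_top R)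
  have : Nontrivial R := nontrivial_of_ne _ _ han
  refine ⟨b, hbI, ?_, hS.mem_center_of_minimal_degree hδ hmin hbI hb hb1⟩
  rintro rfl
  exact one_ne_zero (by rw [← hb1, map_zero, Finsupp.zero_apply])
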